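/- Let S and A be finite nonempty types, T : S → A → S → ℝ a transition kernel (T s a s' ≥ 0 and ∑_{s'} T s a s' = 1 for all s, a), R : S → A → S → ℝ a reward function, γ ∈ [0,1), d : S → ℝ a potential function, and λ ∈ ℝ. If Q satisfies the Bellman optimality equation for reward R and Q' satisfies the Bellman optimality equation for the shaped reward R'(s,a,s') = R(s,a,s') + λ·(γ·d(s') − d(s)), then the optimal value functions are related by an additive potential shift: for every state s, max_{a} Q'(s,a) = (max_{a} Q(s,a)) − λ·d(s). -/
import Mathlib


/-- Maximum of a real-valued function over a finite nonempty type,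
taken as `Finset.max'` over `Finset.univ`. -/
noncomputable def fmax {A : Type*} [Fintype A] [Nonempty A] (f : A → ℝ) : ℝ :=
  (Finset.univ.image f).max' (Finset.univ_nonempty.image f)

lemma le_fmax {A : Type*} [Fintype A] [Nonempty A] (f : A → ℝ) (a : A) :
    f a ≤ fmax f :=
  Finset.le_max' _ _ (Finset.mem_image_of_mem f (Finset.mem_univ a))

lemma fmax_le {A : Type*} [Fintype A] [Nonempty A] (f : A → ℝ) {c : ℝ}
    (h : ∀ a, f a ≤ c) : fmax f ≤ c := by
  apply Finset.max'_le
  intro y hy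
  obtain ⟨a, _, rfl⟩ := Finset.mem_image.mp hy
  exact h a

lemma fmax_mem {A : Type*} [Fintype A] [Nonempty A] (f : A → ℝ) :
    ∃ a, fmax f = f a := by
  have := Finset.max'_mem (Finset.univ.image f) (Finset.univ_nonempty.image f)
  obtain ⟨a, _, ha⟩ := Finset.mem_image.mp this
  exact ⟨a, ha.symm⟩

lemma abs_fmax_sub_fmax_le {A : Type*} [Fintype A] [Nonempty A]
    (f g : A → ℝ) {c : ℝ} (h : ∀ a, |f a - g a| ≤ c) :
    |fmax f - fmax g| ≤ c := by
  rw [abs_le]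
  constructor
  · obtain ⟨a, ha⟩ := fmax_mem g
    have h1 := (abs_le.mp (h a)).1
    have h2 := le_fmax f a
    linarith
  · obtain ⟨a, ha⟩ := fmax_mem f
    have h1 := (abs_le.mp (h a)).2
    have h2 := le_fmax g a
    linarith

lemma fmax_sub_const {A : Type*} [Fintype A] [Nonempty A] (f : A → ℝ) (c : ℝ) :
    fmax (fun a => f a - c) = fmax f - c := by
  apply le_antisymm
  · apply fmax_le
    intro a
    have := le_fmax f a
    simp only [sub_le_sub_iff_right]
    exact this
  · obtain ⟨a, ha⟩ := fmax_mem f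
    have := le_fmax (fun a => f a - c) a
    linarith

/-- The optimal value function of the potential-based shaped MDP equals the
optimal value function of the original MDP shifted by `lam * d s`. -/
theorem shaped_value_eq_shifted
    {S A : Type*} [Fintype S] [Nonempty S] [Fintype A] [Nonempty A]
    (T : S → A → S → ℝ) (hT0 : ∀ s a s', 0 ≤ T s a s')
    (hT1 : ∀ s a, ∑ s', T s a s' = 1)
    (R : S → A → S → ℝ) (γ : ℝ) (hγ0 : 0 ≤ γ) (hγ1 : γ < 1)
    (d : S → ℝ) (lam : ℝ)
    (Q Q' : S → A → ℝ)
    (hQ : ∀ s a, Q s a =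
      ∑ s', T s a s' * (R s a s' + γ * fmax (fun a' => Q s' a')))
    (hQ' : ∀ s a, Q' s a =
      ∑ s', T s a s' * ((R s a s' + lam * (γ * d s' - d s)) +
        γ * fmax (fun a' => Q' s' a'))) :
    ∀ s : S, fmax (fun a => Q' s a) = fmax (fun a => Q s a) - lam * d s := by
  set V : S → ℝ := fun s => fmax (fun a => Q s a) with hV
  set V' : S → ℝ := fun s => fmax (fun a => Q' s a) with hV'
  set D : S → ℝ := fun s => |V' s - (V s - lam * d s)| with hD
  set M : ℝ := fmax D with hM
  have hM0 : 0 ≤ M := by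
    obtain s := Classical.arbitrary S
    exact le_trans (abs_nonneg _) (le_fmax D s)
  -- key pointwise bound
  have key : ∀ s, D s ≤ γ * M := by
    intro s
    have hbound : ∀ a, |Q' s a - (Q s a - lam * d s)| ≤ γ * M := by
      intro a
      have hdiff : Q' s a - (Q s a - lam * d s) =
          γ * ∑ s', T s a s' * (V' s' - (V s' - lam * d s')) := by
        rw [hQ s a, hQ' s a]
        have hconst : lam * d s = ∑ s', T s a s' * (lam * d s) := by
          rw [← Finset.sum_mul, hT1 s a, one_mul]
        rw [hconst, Finset.mul_sum, ← Finset.sum_sub_distrib,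
          ← Finset.sum_sub_distrib]
        apply Finset.sum_congr rfl
        intro s' _
        simp only [hV, hV']
        ring
      rw [hdiff, abs_mul, abs_of_nonneg hγ0]
      apply mul_le_mul_of_nonneg_left _ hγ0
      calc |∑ s', T s a s' * (V' s' - (V s' - lam * d s'))|
          ≤ ∑ s', |T s a s' * (V' s' - (V s' - lam * d s'))| :=
            Finset.abs_sum_le_sum_abs _ _
        _ ≤ ∑ s', T s a s' * M := by
            apply Finset.sum_le_sum
            intro s' _
            rw [abs_mul, abs_of_nonneg (hT0 s a s')]
            exact mul_le_mul_of_nonneg_left (le_fmax D s') (hT0 s a s')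
        _ = M := by rw [← Finset.sum_mul, hT1 s a, one_mul]
    have := abs_fmax_sub_fmax_le (fun a => Q' s a)
      (fun a => Q s a - lam * d s) hbound
    rw [fmax_sub_const] at this
    exact this
  have hMle : M ≤ γ * M := fmax_le D key
  have hMzero : M = 0 := by nlinarith
  intro s
  have h1 : D s ≤ 0 := hMzero ▸ le_fmax D s
  have h2 : D s = 0 := le_antisymm h1 (abs_nonneg _)
  have := abs_eq_zero.mp h2
  linarith [this]
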